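/- Let n ≥ 3, δ > 0, and s ≥ √(1+δ) · ((n−2)/(n+2))^((n−2)/(2n)). Then the equation w^(n−1)/(w^n − s^n) + δ/w = conj(w) has exactly 3n complex solutions. -/

import Mathlib

/-!
Multiplying the equation by `w (wⁿ - sⁿ)` and writing `t = |w|` turns it into
`(t² - 1 - δ) wⁿ = (t² - δ) sⁿ`, so `wⁿ` is real, `wⁿ = ±tⁿ`, and `t` is a positive root of
`tⁿ (t² - 1 - δ) = ±sⁿ (t² - δ)`. With the sign `+` there are exactly two such roots, one in
`(0, √δ)` and one beyond `√(1 + δ)`: on either side of `√(1 + δ)` the root equation reads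
`tⁿ = sⁿ + sⁿ / (t² - 1 - δ)`, whose right side decreases. With the sign `-` there is exactly one
root, in `(√δ, √(1 + δ))`: the lower bound on `s` (a weighted AM-GM inequality) makes the
difference of the two sides monotone on `[0, ∞)`, and a monotone polynomial that is not constant
is strictly monotone. Each of the three resulting values `±tⁿ` has `n` distinct `n`-th roots.
-/

open Complex ComplexConjugate Polynomial Set Finset

def solutions (n : ℕ) (δ c : ℝ) : Set ℂ :=
  {w | w ≠ 0 ∧ w ^ n ≠ c ∧ w ^ (n - 1) / (w ^ n - c) + δ / w = conj w}

/-- A solution `w` with `wⁿ = ±|w|ⁿ` corresponds to a root `t = |w|` of `radial n δ (±c)`. -/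
def radial (n : ℕ) (δ c t : ℝ) : ℝ := t ^ n * (t ^ 2 - 1 - δ) - c * (t ^ 2 - δ)

lemma Complex.card_nthRootsFinset {n : ℕ} (hn : n ≠ 0) {a : ℂ} (ha : a ≠ 0) :
    #(nthRootsFinset n a) = n := by
  classical
  have hζ := Complex.isPrimitiveRoot_exp n hn
  rw [nthRootsFinset_def, Multiset.toFinset_card_of_nodup (hζ.nthRoots_nodup ha),
    hζ.card_nthRoots, if_pos (IsAlgClosed.exists_pow_nat_eq a (Nat.pos_of_ne_zero hn))]

lemma Complex.ncard_preimage_pow {n : ℕ} (hn : n ≠ 0) {Z : Finset ℂ} (hZ : 0 ∉ Z) :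
    ((· ^ n) ⁻¹' (Z : Set ℂ)).ncard = n * #Z := by
  classical
  have hpre : (· ^ n) ⁻¹' (Z : Set ℂ) = ↑(Z.biUnion fun a => nthRootsFinset n a) := by
    ext w; simp [mem_nthRootsFinset (Nat.pos_of_ne_zero hn)]
  rw [hpre, ncard_coe_finset, card_biUnion, sum_congr rfl fun a ha =>
    card_nthRootsFinset hn (ne_of_mem_of_not_mem ha hZ), sum_const, smul_eq_mul, mul_comm]
  intro a _ b _ hab
  refine Finset.disjoint_left.2 fun w ha hb => hab ?_
  rw [← (mem_nthRootsFinset (Nat.pos_of_ne_zero hn) a).1 ha,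
    (mem_nthRootsFinset (Nat.pos_of_ne_zero hn) b).1 hb]

lemma Polynomial.strictMonoOn_of_monotoneOn {p : ℝ[X]} {s : Set ℝ} (hs : s.OrdConnected)
    (hp : MonotoneOn p.eval s) (hnc : ∀ a, p ≠ C a) : StrictMonoOn p.eval s := by
  intro x hx y hy hxy
  refine (hp hx hy hxy.le).lt_of_ne fun h => hnc (p.eval x) ?_
  rw [← sub_eq_zero]
  refine eq_zero_of_infinite_isRoot _ ((Icc_infinite hxy).mono fun z hz => ?_)
  have hz' : z ∈ s := hs.out hx hy hz
  have hzx : p.eval z = p.eval x :=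
    le_antisymm ((hp hz' hy hz.2).trans_eq h.symm) (hp hx hz' hz.1)
  simp [hzx]

/-- Weighted AM-GM; the inductive step adds `(x - y) (xᵐ⁺¹ (x + y) - 2 yᵐ⁺²) ≥ 0`. -/
lemma pow_mul_sq_le (m : ℕ) {x y : ℝ} (hx : 0 ≤ x) (hy : 0 ≤ y) :
    (m + 2) * x ^ m * y ^ 2 ≤ m * x ^ (m + 2) + 2 * y ^ (m + 2) := by
  induction m with
  | zero => simp
  | succ m ih =>
    have hstep : 0 ≤ (x - y) * (x ^ (m + 1) * (x + y) - 2 * y ^ (m + 2)) := by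
      rcases le_total x y with hxy | hxy
      · refine mul_nonneg_of_nonpos_of_nonpos (by linarith) ?_
        have h1 := mul_le_mul_of_nonneg_right (pow_le_pow_left₀ hx hxy (m + 1))
          (by linarith : 0 ≤ x + y)
        have h2 := mul_le_mul_of_nonneg_left (by linarith : x + y ≤ 2 * y) (pow_nonneg hy (m + 1))
        rw [pow_succ y (m + 1)]
        linarith
      · refine mul_nonneg (by linarith) ?_
        have h1 := mul_le_mul_of_nonneg_right (pow_le_pow_left₀ hy hxy (m + 1))
          (by linarith : 0 ≤ x + y)
        have h2 := mul_le_mul_of_nonneg_left (by linarith : 2 * y ≤ x + y) (pow_nonneg hy (m + 1))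
        rw [pow_succ y (m + 1)]
        linarith
    push_cast
    linear_combination x * ih + hstep

lemma rpow_pow_eq_sqrt_pow {r : ℝ} (hr : 0 ≤ r) {n : ℕ} (hn : 2 ≤ n) :
    (r ^ (((n : ℝ) - 2) / (2 * n))) ^ n = √r ^ (n - 2) := by
  rw [← Real.rpow_natCast, ← Real.rpow_mul hr, Real.sqrt_eq_rpow, ← Real.rpow_natCast,
    ← Real.rpow_mul hr, Nat.cast_sub hn]
  congr 1
  field_simp
  ring

section Reduction

variable {n : ℕ} {δ c : ℝ}

lemma solution_equation_iff (hn : n ≠ 0) {S w : ℂ} (hw : w ≠ 0) (hwS : w ^ n ≠ S) :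
    w ^ (n - 1) / (w ^ n - S) + δ / w = conj w ↔
      ((‖w‖ ^ 2 - 1 - δ : ℝ) : ℂ) * w ^ n = ((‖w‖ ^ 2 - δ : ℝ) : ℂ) * S := by
  have hpow : w ^ (n - 1) * w = w ^ n := pow_sub_one_mul hn w
  rw [div_add_div _ _ (sub_ne_zero.2 hwS) hw, div_eq_iff (mul_ne_zero (sub_ne_zero.2 hwS) hw)]
  push_cast
  rw [← conj_mul']
  constructor <;> intro h <;> linear_combination -h + hpow

lemma pow_eq_norm_pow_or_neg_of_mem_solutions (hn : n ≠ 0) (hc : c ≠ 0) {w : ℂ}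
    (hw : w ∈ solutions n δ c) : w ^ n = ‖w‖ ^ n ∨ w ^ n = -‖w‖ ^ n := by
  obtain ⟨hw0, hwc, heq⟩ := hw
  rw [solution_equation_iff hn hw0 hwc] at heq
  set t := ‖w‖
  have hu : t ^ 2 - 1 - δ ≠ 0 := by
    intro hu
    rw [hu, show t ^ 2 - δ = 1 by linarith] at heq
    simp only [ofReal_zero, zero_mul, ofReal_one, one_mul] at heq
    exact hc (ofReal_eq_zero.1 heq.symm)
  have hx : w ^ n = (((t ^ 2 - δ) * c / (t ^ 2 - 1 - δ) : ℝ) : ℂ) := by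
    rw [ofReal_div, eq_div_iff (ofReal_ne_zero.2 hu), ofReal_mul]
    linear_combination heq
  have habs : |(t ^ 2 - δ) * c / (t ^ 2 - 1 - δ)| = t ^ n := by
    rw [← Real.norm_eq_abs, ← norm_real, ← hx, norm_pow]
  rcases (abs_eq (by positivity)).1 habs with h | h <;> rw [hx, h] <;> push_cast <;> simp

lemma mem_solutions_iff_radial_eq_zero (hn : n ≠ 0) {t ε : ℝ} (ht : 0 < t)
    (hε : ε = 1 ∨ ε = -1) {w : ℂ} (hw : w ^ n = ε * t ^ n) :
    w ∈ solutions n δ c ↔ radial n δ (ε * c) t = 0 := by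
  have hε2 : ε * ε = 1 := by rcases hε with rfl | rfl <;> norm_num
  have hwn : w ^ n = ((ε * t ^ n : ℝ) : ℂ) := by push_cast; exact hw
  have hnorm : ‖w‖ = t := by
    have : |ε| = 1 := by rcases hε with rfl | rfl <;> norm_num
    rw [← pow_left_inj₀ (norm_nonneg w) ht.le hn, ← norm_pow, hwn, norm_real, Real.norm_eq_abs,
      abs_mul, this, one_mul, abs_of_pos (pow_pos ht n)]
  have hw0 : w ≠ 0 := norm_pos_iff.1 (hnorm ▸ ht)
  simp only [solutions, mem_ofPred_eq, radial]
  rw [and_iff_right hw0]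
  constructor
  · rintro ⟨hwc, heq⟩
    rw [solution_equation_iff hn hw0 hwc, hnorm, hwn] at heq
    have heq' : (t ^ 2 - 1 - δ) * (ε * t ^ n) = (t ^ 2 - δ) * c := by exact_mod_cast heq
    linear_combination ε * heq' - t ^ n * (t ^ 2 - 1 - δ) * hε2
  · intro hr
    have hwc : w ^ n ≠ c := by
      rw [hwn, Ne, ofReal_inj]
      intro h
      have : t ^ n = 0 := by
        linear_combination -hr - t ^ n * (t ^ 2 - δ) * hε2 + ε * (t ^ 2 - δ) * h
      exact (pow_pos ht n).ne' this
    refine ⟨hwc, (solution_equation_iff hn hw0 hwc).2 ?_⟩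
    rw [hnorm, hwn]
    exact_mod_cast (by linear_combination ε * hr + c * (t ^ 2 - δ) * hε2 :
      (t ^ 2 - 1 - δ) * (ε * t ^ n) = (t ^ 2 - δ) * c)

lemma mem_solutions_iff (hn : n ≠ 0) (hc : c ≠ 0) {w : ℂ} :
    w ∈ solutions n δ c ↔ ∃ t : ℝ, 0 < t ∧
      ∃ ε : ℝ, (ε = 1 ∨ ε = -1) ∧ w ^ n = ε * t ^ n ∧ radial n δ (ε * c) t = 0 := by
  constructor
  · intro hw
    have ht : 0 < ‖w‖ := norm_pos_iff.2 hw.1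
    rcases pow_eq_norm_pow_or_neg_of_mem_solutions hn hc hw with h | h
    · have h' : w ^ n = ((1 : ℝ) : ℂ) * (‖w‖ : ℂ) ^ n := by simpa using h
      exact ⟨‖w‖, ht, 1, .inl rfl, h', (mem_solutions_iff_radial_eq_zero hn ht (.inl rfl) h').1 hw⟩
    · have h' : w ^ n = ((-1 : ℝ) : ℂ) * (‖w‖ : ℂ) ^ n := by simpa using h
      exact ⟨‖w‖, ht, -1, .inr rfl, h', (mem_solutions_iff_radial_eq_zero hn ht (.inr rfl) h').1 hw⟩
  · rintro ⟨t, ht, ε, hε, hw, hr⟩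
    exact (mem_solutions_iff_radial_eq_zero hn ht hε hw).2 hr

end Reduction

section RealRoots

variable {n : ℕ} {δ c : ℝ}

lemma continuous_radial : Continuous (radial n δ c) := by
  unfold radial; fun_prop

lemma radial_sqrt (hδ : 0 ≤ δ) : radial n δ c √δ = -√δ ^ n := by
  simp [radial, Real.sq_sqrt hδ]

lemma radial_sqrt_one_add (hδ : 0 ≤ δ) : radial n δ c √(1 + δ) = -c := by
  simp [radial, Real.sq_sqrt (by linarith : 0 ≤ 1 + δ)]

lemma radial_eq_eval (t : ℝ) :
    radial n δ c t = (X ^ n * (X ^ 2 - 1 - C δ) - C c * (X ^ 2 - C δ)).eval t := by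
  simp only [radial, eval_sub, eval_mul, eval_pow, eval_X, eval_C, eval_one]

lemma hasDerivAt_radial (t : ℝ) : HasDerivAt (radial n δ c)
    (n * t ^ (n - 1) * (t ^ 2 - 1 - δ) + t ^ n * (2 * t) - c * (2 * t)) t := by
  have h2 : HasDerivAt (fun t : ℝ => t ^ 2) (2 * t) t := by simpa using hasDerivAt_pow 2 t
  exact ((hasDerivAt_pow n t).mul (h2.sub_const _ |>.sub_const _)).sub
    ((h2.sub_const _).const_mul c)

/-- On `t > 0` and for `c > 0`, `radial n δ c t = 0` means `tⁿ = c + c / (t² - 1 - δ)`, whose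
right side decreases on either side of `√(1 + δ)`. -/
lemma eq_of_radial_eq_zero (hn : n ≠ 0) (hc : 0 < c) {t t' : ℝ} (ht : 0 ≤ t) (ht' : 0 ≤ t')
    (h : radial n δ c t = 0) (h' : radial n δ c t' = 0)
    (hside : 0 < (t ^ 2 - 1 - δ) * (t' ^ 2 - 1 - δ)) : t = t' := by
  wlog hlt : t < t' generalizing t t'
  · rcases (not_lt.1 hlt).lt_or_eq with hlt' | heq
    · exact (this ht' ht h' h (by linarith) hlt').symm
    · exact heq.symm
  have key : (t' ^ n - t ^ n) * ((t ^ 2 - 1 - δ) * (t' ^ 2 - 1 - δ)) = c * (t ^ 2 - t' ^ 2) := by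
    unfold radial at h h'
    linear_combination (t ^ 2 - 1 - δ) * h' - (t' ^ 2 - 1 - δ) * h
  have hpow : 0 < t' ^ n - t ^ n := sub_pos.2 (pow_lt_pow_left₀ hlt ht hn)
  have hsq : t ^ 2 < t' ^ 2 := pow_lt_pow_left₀ hlt ht two_ne_zero
  nlinarith [mul_pos hpow hside]

lemma exists_radial_roots_of_pos (hn : n ≠ 0) (hδ : 0 < δ) (hc : 0 < c) :
    ∃ t₁ t₂ : ℝ, 0 < t₁ ∧ t₁ < t₂ ∧ ∀ t > 0, radial n δ c t = 0 ↔ t = t₁ ∨ t = t₂ := by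
  obtain ⟨t₁, ⟨ht₁, ht₁δ⟩, h₁⟩ : ∃ t ∈ Ioo 0 √δ, radial n δ c t = 0 := by
    refine intermediate_value_Ioo' (Real.sqrt_nonneg δ) continuous_radial.continuousOn ⟨?_, ?_⟩
    · rw [radial_sqrt hδ.le]
      exact neg_neg_of_pos (pow_pos (Real.sqrt_pos.2 hδ) n)
    · have h0 : radial n δ c 0 = c * δ := by simp [radial, zero_pow hn]
      exact h0 ▸ mul_pos hc hδ
  set M := 2 + δ + 2 * c
  have hM : 1 ≤ M := by linarith
  have hbM : √(1 + δ) ≤ M := Real.sqrt_le_iff.2 ⟨by linarith, by nlinarith⟩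
  obtain ⟨t₂, ⟨ht₂, -⟩, h₂⟩ : ∃ t ∈ Ioo √(1 + δ) M, radial n δ c t = 0 := by
    refine intermediate_value_Ioo hbM continuous_radial.continuousOn ⟨?_, ?_⟩
    · rw [radial_sqrt_one_add hδ.le]; linarith
    · have hMn : M ≤ M ^ n := le_self_pow₀ hM hn
      have hMM : M ≤ M ^ 2 := by nlinarith
      simp only [radial]
      nlinarith [mul_le_mul_of_nonneg_right hMn (by linarith : 0 ≤ M ^ 2 - 1 - δ)]
  have ht₁sq : t₁ ^ 2 < δ := (Real.lt_sqrt ht₁.le).1 ht₁δ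
  have ht₂₀ : 0 < t₂ := (Real.sqrt_nonneg _).trans_lt ht₂
  have ht₂sq : 1 + δ < t₂ ^ 2 := (Real.sqrt_lt' ht₂₀).1 ht₂
  refine ⟨t₁, t₂, ht₁, by nlinarith, fun t ht => ⟨fun h => ?_, ?_⟩⟩
  · have hne : t ^ 2 ≠ 1 + δ := fun heq => by
      rw [radial, heq] at h
      linarith
    rcases hne.lt_or_gt with hlt | hgt
    · exact .inl (eq_of_radial_eq_zero hn hc ht.le ht₁.le h h₁ (by nlinarith))
    · exact .inr (eq_of_radial_eq_zero hn hc ht.le ht₂₀.le h h₂ (by nlinarith))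
  · rintro (rfl | rfl) <;> assumption

/-- The derivative of `radial n δ (-c)` is `t ((n + 2) tⁿ - n (1 + δ) tⁿ⁻² + 2c)`. -/
lemma monotoneOn_radial_neg (hn : 2 ≤ n)
    (hc : ∀ t : ℝ, 0 ≤ t → n * (1 + δ) * t ^ (n - 2) - (n + 2) * t ^ n ≤ 2 * c) :
    MonotoneOn (radial n δ (-c)) (Ici 0) := by
  refine monotoneOn_of_deriv_nonneg (convex_Ici 0) continuous_radial.continuousOn
    (fun t _ => (hasDerivAt_radial t).differentiableAt.differentiableWithinAt) fun t ht => ?_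
  rw [interior_Ici] at ht
  rw [(hasDerivAt_radial t).deriv]
  obtain ⟨m, rfl⟩ : ∃ m, n = m + 2 := ⟨n - 2, by omega⟩
  have hct := hc t (le_of_lt ht)
  simp only [show m + 2 - 1 = m + 1 by omega, show m + 2 - 2 = m by omega] at hct ⊢
  have : 0 ≤ t * (2 * c - ((m + 2 : ℕ) * (1 + δ) * t ^ m - ((m + 2 : ℕ) + 2) * t ^ (m + 2))) :=
    mul_nonneg (le_of_lt ht) (by linarith)
  push_cast at this ⊢
  linear_combination this

lemma exists_unique_radial_root_of_neg (hn : 2 ≤ n) (hδ : 0 < δ) (hc : 0 < c)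
    (hthr : ∀ t : ℝ, 0 ≤ t → n * (1 + δ) * t ^ (n - 2) - (n + 2) * t ^ n ≤ 2 * c) :
    ∃ t₃ : ℝ, 0 < t₃ ∧ ∀ t > 0, radial n δ (-c) t = 0 ↔ t = t₃ := by
  have ha : radial n δ (-c) √δ < 0 := by
    rw [radial_sqrt hδ.le]
    exact neg_neg_of_pos (pow_pos (Real.sqrt_pos.2 hδ) n)
  have hb : radial n δ (-c) √(1 + δ) = c := by rw [radial_sqrt_one_add hδ.le, neg_neg]
  obtain ⟨t₃, ⟨ht₃, -⟩, h₃⟩ : ∃ t ∈ Ioo √δ √(1 + δ), radial n δ (-c) t = 0 :=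
    intermediate_value_Ioo (Real.sqrt_le_sqrt (by linarith)) continuous_radial.continuousOn
      ⟨ha, by rwa [hb]⟩
  have ht₃₀ : 0 < t₃ := (Real.sqrt_nonneg δ).trans_lt ht₃
  set P : ℝ[X] := X ^ n * (X ^ 2 - 1 - C δ) - C (-c) * (X ^ 2 - C δ)
  have hP : radial n δ (-c) = P.eval := funext radial_eq_eval
  have hnc : ∀ a, P ≠ C a := fun a hP' => by
    simp only [hP, hP', eval_C] at ha hb
    linarith
  have hinj := (strictMonoOn_of_monotoneOn ordConnected_Ici
    (hP ▸ monotoneOn_radial_neg hn hthr) hnc).injOn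
  refine ⟨t₃, ht₃₀, fun t ht => ⟨fun h => hinj (mem_Ici.2 ht.le) (mem_Ici.2 ht₃₀.le) ?_,
    fun h => h ▸ h₃⟩⟩
  rw [← hP, h, h₃]

/-- `2 (1 + δ) yⁿ⁻²` is the maximum over `t ≥ 0` of `n (1 + δ) tⁿ⁻² - (n + 2) tⁿ`. -/
lemma pow_sub_pow_le_of_critical (hn : 3 ≤ n) {y : ℝ} (hy : 0 ≤ y)
    (hy2 : (n + 2) * y ^ 2 = (n - 2) * (1 + δ)) (hc : (1 + δ) * y ^ (n - 2) ≤ c)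
    (t : ℝ) (ht : 0 ≤ t) : n * (1 + δ) * t ^ (n - 2) - (n + 2) * t ^ n ≤ 2 * c := by
  obtain ⟨m, rfl⟩ : ∃ m, n = m + 2 := ⟨n - 2, by omega⟩
  have hm : (0 : ℝ) < m := by exact_mod_cast (by omega : 0 < m)
  simp only [Nat.add_sub_cancel] at hc ⊢
  push_cast at hy2 ⊢
  have key : m * ((m + 2) * (1 + δ) * t ^ m - (m + 2 + 2) * t ^ (m + 2)) ≤
      m * (2 * ((1 + δ) * y ^ m)) := by
    linear_combination (m + 4) * pow_mul_sq_le m ht hy - ((m + 2) * t ^ m - 2 * y ^ m) * hy2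
  linarith [le_of_mul_le_mul_left key hm]

lemma pow_sub_pow_le_of_le_threshold (hn : 3 ≤ n) (hδ : 0 < δ) {s : ℝ}
    (hs : √(1 + δ) * (((n : ℝ) - 2) / ((n : ℝ) + 2)) ^ (((n : ℝ) - 2) / (2 * (n : ℝ))) ≤ s)
    (t : ℝ) (ht : 0 ≤ t) : n * (1 + δ) * t ^ (n - 2) - (n + 2) * t ^ n ≤ 2 * s ^ n := by
  have hn' : (3 : ℝ) ≤ n := by exact_mod_cast hn
  have hr : 0 ≤ ((n : ℝ) - 2) / ((n : ℝ) + 2) := div_nonneg (by linarith) (by linarith)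
  refine pow_sub_pow_le_of_critical hn (y := √(1 + δ) * √(((n : ℝ) - 2) / ((n : ℝ) + 2)))
    (by positivity) ?_ ?_ t ht
  · rw [mul_pow, Real.sq_sqrt (by linarith), Real.sq_sqrt hr]
    field_simp
  · calc (1 + δ) * (√(1 + δ) * √(((n : ℝ) - 2) / ((n : ℝ) + 2))) ^ (n - 2)
        = (√(1 + δ) * (((n : ℝ) - 2) / ((n : ℝ) + 2)) ^ (((n : ℝ) - 2) / (2 * (n : ℝ)))) ^ n := by
          have hpow : √(1 + δ) ^ n = √(1 + δ) ^ 2 * √(1 + δ) ^ (n - 2) := by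
            rw [← pow_add]; congr 1; omega
          rw [mul_pow, mul_pow, rpow_pow_eq_sqrt_pow hr (by omega), hpow,
            Real.sq_sqrt (by linarith), mul_assoc]
      _ ≤ s ^ n := pow_le_pow_left₀ (by positivity) hs n

end RealRoots

section Count

variable {n : ℕ} {δ c t₁ t₂ t₃ : ℝ}

lemma solutions_eq_preimage (hn : n ≠ 0) (hc : c ≠ 0) (h₁ : 0 < t₁) (h₂ : 0 < t₂) (h₃ : 0 < t₃)
    (hplus : ∀ t > 0, radial n δ c t = 0 ↔ t = t₁ ∨ t = t₂)
    (hminus : ∀ t > 0, radial n δ (-c) t = 0 ↔ t = t₃) :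
    solutions n δ c = (· ^ n) ⁻¹' ↑({(t₁ : ℂ) ^ n, (t₂ : ℂ) ^ n, -(t₃ : ℂ) ^ n} : Finset ℂ) := by
  ext w
  simp only [mem_solutions_iff hn hc, Finset.coe_insert, Finset.coe_singleton, Set.mem_preimage,
    Set.mem_insert_iff, Set.mem_singleton_iff]
  constructor
  · rintro ⟨t, ht, ε, rfl | rfl, hw, hr⟩
    · rcases (hplus t ht).1 (by simpa using hr) with rfl | rfl <;> simp [hw]
    · obtain rfl := (hminus t ht).1 (by simpa using hr)
      simp [hw]
  · rintro (hw | hw | hw)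
    · exact ⟨t₁, h₁, 1, .inl rfl, by simpa using hw, by simpa using (hplus t₁ h₁).2 (.inl rfl)⟩
    · exact ⟨t₂, h₂, 1, .inl rfl, by simpa using hw, by simpa using (hplus t₂ h₂).2 (.inr rfl)⟩
    · exact ⟨t₃, h₃, -1, .inr rfl, by simpa using hw, by simpa using (hminus t₃ h₃).2 rfl⟩

lemma ncard_solutions (hn : n ≠ 0) (hc : c ≠ 0) (h₁ : 0 < t₁) (h₁₂ : t₁ < t₂) (h₃ : 0 < t₃)
    (hplus : ∀ t > 0, radial n δ c t = 0 ↔ t = t₁ ∨ t = t₂)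
    (hminus : ∀ t > 0, radial n δ (-c) t = 0 ↔ t = t₃) :
    (solutions n δ c).ncard = 3 * n := by
  have h₂ : 0 < t₂ := h₁.trans h₁₂
  have hpow : ∀ {t : ℝ}, 0 < t → (t : ℂ) ^ n ≠ 0 := fun ht =>
    pow_ne_zero n (ofReal_ne_zero.2 ht.ne')
  have hne : ∀ {t t' : ℝ}, 0 < t → 0 < t' → (t : ℂ) ^ n ≠ -(t' : ℂ) ^ n := fun {t t'} ht ht' h => by
    have : t ^ n = -t' ^ n := by exact_mod_cast h
    linarith [pow_pos ht n, pow_pos ht' n]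
  rw [solutions_eq_preimage hn hc h₁ h₂ h₃ hplus hminus,
    ncard_preimage_pow hn (by simp [eq_comm, hpow h₁, hpow h₂, hpow h₃]),
    card_eq_three.2 ⟨_, _, _, ?_, hne h₁ h₃, hne h₂ h₃, rfl⟩, mul_comm]
  exact_mod_cast (pow_lt_pow_left₀ h₁₂ h₁.le hn).ne

end Count

/-- For `n ≥ 3`, `δ > 0` and `s ≥ √(1+δ)·((n−2)/(n+2))^((n−2)/(2n))`, the equation
`w^(n−1)/(w^n − s^n) + δ/w = conj w` has exactly `3n` solutions. -/
theorem stmt_19 (n : ℕ) (hn : 3 ≤ n) (δ s : ℝ) (hδ : 0 < δ)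
    (hs : s ≥ Real.sqrt (1 + δ) *
      (((n : ℝ) - 2) / ((n : ℝ) + 2)) ^ ((((n : ℝ) - 2)) / (2 * (n : ℝ)))) :
    {w : ℂ | w ≠ 0 ∧ w ^ n ≠ (s : ℂ) ^ n ∧
      w ^ (n - 1) / (w ^ n - (s : ℂ) ^ n) + (δ : ℂ) / w =
        (starRingEnd ℂ) w}.ncard = 3 * n := by
  have hn' : (3 : ℝ) ≤ n := by exact_mod_cast hn
  have hs₀ : 0 < s := lt_of_lt_of_le (mul_pos (Real.sqrt_pos.2 (by linarith))
    (Real.rpow_pos_of_pos (div_pos (by linarith) (by positivity)) _)) hs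
  have hc : 0 < s ^ n := pow_pos hs₀ n
  obtain ⟨t₁, t₂, h₁, h₁₂, hplus⟩ := exists_radial_roots_of_pos (n := n) (by omega) hδ hc
  obtain ⟨t₃, h₃, hminus⟩ :=
    exists_unique_radial_root_of_neg (by omega) hδ hc (pow_sub_pow_le_of_le_threshold hn hδ hs)
  have hsol : {w : ℂ | w ≠ 0 ∧ w ^ n ≠ (s : ℂ) ^ n ∧
      w ^ (n - 1) / (w ^ n - (s : ℂ) ^ n) + (δ : ℂ) / w = (starRingEnd ℂ) w} =
      solutions n δ (s ^ n) := by
    simp only [solutions, ofReal_pow]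
  rw [hsol]
  exact ncard_solutions (by omega) hc.ne' h₁ h₁₂ h₃ hplus hminus
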